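/- arXiv:2111.13322 — 2 statements merged into one kernel-verified Lean document; each statement's English description precedes it below -/
import Mathlib

section
/- (Corollary 1, geometric decay form.) Assume each f_i is convex, P is μ-strongly convex with minimizer w* and optimal value P*, the δ-similarity condition holds, and 0 < η ≤ min(1/(8nL), 1/(8n²δ)). Define the Shuffled-SARAH trajectory: given w_0, v_0 ∈ ℝ^d and permutations π_s of {1,…,n} for each s ≥ 0, run for each s a SARAH epoch with step size η, permutation π_s, start point w_s and initial direction v_s, producing inner iterates w¹_s,…,wⁿ_s and output w_{s+1}, and set v_{s+1} = (1/n)·Σ_{i=1}^{n} ∇f_{π_s(i)}(wⁱ_s). Then for every S ≥ 1: P(w_S) − P* + (η(n+1)/16)·‖v_{S−1}‖² ≤ (1 − η·μ·(n+1)/2)^{S−1} · (P(w_1) − P* + (η(n+1)/16)·‖v_0‖²). -/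
/-
Within an epoch, each SARAH update moves the direction by at most `η L ‖V i‖`, so when
`η n L ≤ 1/8` all inner directions stay within `(5/32) ‖v_s‖` of `v_s`, and the next initial
direction `v_{s+1}`, an average of gradients taken at points `O(η n ‖v_s‖)` away from `w_{s+1}`,
is within `(5/32) ‖v_s‖` of `∇P(w_{s+1})`. The epoch is therefore an inexact gradient step
`w_{s+1} = w_s - τ ḡ` with `τ = η (n + 1)` and `ḡ` the mean of the inner directions. The descent
lemma, the Polyak–Łojasiewicz inequality given by strong convexity, and these two error bounds
contract the Lyapunov function `P(w_{s+1}) - P* + (τ/16) ‖v_s‖²` by `1 - τ μ / 2` per epoch.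
-/

open Set Finset
open scoped RealInnerProductSpace

section NormedSpace

variable {E : Type*} [NormedAddCommGroup E] [NormedSpace ℝ E]

theorem ConvexOn.add_fderiv_le {g : E → ℝ} {g' : E →L[ℝ] ℝ} {x : E}
    (hg : ConvexOn ℝ univ g) (hx : HasFDerivAt g g' x) (y : E) :
    g x + g' (y - x) ≤ g y := by
  let ℓ : ℝ →ᵃ[ℝ] E := AffineMap.lineMap x y
  have hline : ConvexOn ℝ univ (g ∘ ℓ) := by simpa using hg.comp_affineMap ℓ
  have hx0 : HasFDerivAt g g' (ℓ 0) := by simpa [ℓ] using hx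
  have hderiv : HasDerivAt (g ∘ ℓ) (g' (y - x)) 0 :=
    hx0.comp_hasDerivAt 0 AffineMap.hasDerivAt_lineMap
  have := hline.le_slope_of_hasDerivAt (mem_univ 0) (mem_univ 1) one_pos hderiv
  simp only [slope_def_field, Function.comp_apply, ℓ, AffineMap.lineMap_apply_zero,
    AffineMap.lineMap_apply_one, sub_zero, div_one] at this
  linarith

theorem norm_inv_card_smul_sum_le {ι : Type*} {s : Finset ι} {x : ι → E} {r : ℝ} (hr : 0 ≤ r)
    (h : ∀ i ∈ s, ‖x i‖ ≤ r) : ‖(#s : ℝ)⁻¹ • ∑ i ∈ s, x i‖ ≤ r := by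
  rcases s.eq_empty_or_nonempty with rfl | hs
  · simpa using hr
  have hcard : (0 : ℝ) < #s := by exact_mod_cast hs.card_pos
  rw [norm_smul, norm_inv, Real.norm_natCast, inv_mul_le_iff₀ hcard]
  calc ‖∑ i ∈ s, x i‖ ≤ ∑ i ∈ s, ‖x i‖ := norm_sum_le _ _
    _ ≤ #s * r := by simpa using sum_le_card_nsmul s _ r h

end NormedSpace

section Gradient

variable {F : Type*} [NormedAddCommGroup F] [InnerProductSpace ℝ F] [CompleteSpace F]

theorem hasGradientAt_const_mul_sum {ι : Type*} (s : Finset ι) (c : ℝ) {f : ι → F → ℝ}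
    (hf : ∀ i, Differentiable ℝ (f i)) (x : F) :
    HasGradientAt (fun w ↦ c * ∑ i ∈ s, f i w) (c • ∑ i ∈ s, gradient (f i) x) x := by
  rw [hasGradientAt_iff_hasFDerivAt, map_smul, map_sum]
  exact (HasFDerivAt.fun_sum fun i _ ↦ ((hf i) x).hasGradientAt.hasFDerivAt).const_mul c

theorem StrongConvexOn.add_inner_add_le {P : F → ℝ} {p x : F} {μ : ℝ}
    (hP : StrongConvexOn univ μ P) (hx : HasGradientAt P p x) (y : F) :
    P x + ⟪p, y - x⟫ + μ / 2 * ‖y - x‖ ^ 2 ≤ P y := by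
  have hq : HasFDerivAt (fun z ↦ P z - μ / 2 * ‖z‖ ^ 2)
      (InnerProductSpace.toDual ℝ F p - (μ / 2) • (2 • innerSL ℝ x)) x :=
    hx.hasFDerivAt.sub ((hasStrictFDerivAt_norm_sq x).hasFDerivAt.const_mul (μ / 2))
  have := (strongConvexOn_iff_convex.mp hP).add_fderiv_le hq y
  simp only [sub_apply, smul_apply,
    InnerProductSpace.toDual_apply_apply, innerSL_apply_apply, smul_eq_mul, nsmul_eq_mul,
    Nat.cast_ofNat, inner_sub_right, real_inner_self_eq_norm_sq] at this
  rw [norm_sub_sq_real, inner_sub_right, real_inner_comm x y]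
  linarith

theorem StrongConvexOn.two_mul_sub_le_norm_sq {P : F → ℝ} {p x : F} {μ : ℝ} (hμ : 0 ≤ μ)
    (hP : StrongConvexOn univ μ P) (hx : HasGradientAt P p x) (y : F) :
    2 * μ * (P x - P y) ≤ ‖p‖ ^ 2 := by
  have hlow := hP.add_inner_add_le hx y
  have hcs : -(‖p‖ * ‖y - x‖) ≤ ⟪p, y - x⟫ := neg_le_of_abs_le (abs_real_inner_le_norm _ _)
  nlinarith [sq_nonneg (‖p‖ - μ * ‖y - x‖)]

theorem le_add_inner_add_of_lipschitz {g : F → ℝ} {g' : F → F} {K : ℝ}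
    (hg : ∀ x, HasGradientAt g (g' x) x) (hK : ∀ a b, ‖g' a - g' b‖ ≤ K * ‖a - b‖) (x y : F) :
    g y ≤ g x + ⟪g' x, y - x⟫ + K / 2 * ‖y - x‖ ^ 2 := by
  set v := y - x
  set ψ : ℝ → ℝ := fun t ↦ g (x + t • v) - t * ⟪g' x, v⟫ - K / 2 * t ^ 2 * ‖v‖ ^ 2
  have hψ : ∀ t : ℝ, HasDerivAt ψ (⟪g' (x + t • v), v⟫ - ⟪g' x, v⟫ - K * t * ‖v‖ ^ 2) t := by
    intro t
    have hline : HasDerivAt (fun t : ℝ ↦ x + t • v) v t := by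
      simpa using ((hasDerivAt_id t).smul_const v).const_add x
    have h1 := (hg (x + t • v)).hasFDerivAt.comp_hasDerivAt t hline
    rw [InnerProductSpace.toDual_apply_apply] at h1
    refine ((h1.sub (hasDerivAt_mul_const ⟪g' x, v⟫)).sub
      (((hasDerivAt_pow 2 t).const_mul (K / 2)).mul_const (‖v‖ ^ 2))).congr_deriv ?_
    push_cast
    ring
  have hanti : AntitoneOn ψ (Icc 0 1) := by
    refine antitoneOn_of_deriv_nonpos (convex_Icc 0 1) ?_ ?_ ?_
    · exact HasDerivAt.continuousOn fun t _ ↦ hψ t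
    · exact fun t _ ↦ (hψ t).differentiableAt.differentiableWithinAt
    intro t ht
    rw [interior_Icc] at ht
    have hstep : ⟪g' (x + t • v) - g' x, v⟫ ≤ K * t * ‖v‖ ^ 2 := calc
      _ ≤ ‖g' (x + t • v) - g' x‖ * ‖v‖ := real_inner_le_norm _ _
      _ ≤ K * ‖t • v‖ * ‖v‖ := by
        gcongr
        simpa using hK (x + t • v) x
      _ = K * t * ‖v‖ ^ 2 := by rw [norm_smul, Real.norm_of_nonneg ht.1.le]; ring
    rw [(hψ t).deriv, ← inner_sub_left]
    linarith
  have := hanti (left_mem_Icc.2 zero_le_one) (right_mem_Icc.2 zero_le_one) zero_le_one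
  simp only [ψ, v, zero_smul, one_smul, add_zero, add_sub_cancel, zero_mul, one_mul, one_pow,
    zero_pow two_ne_zero, mul_zero, sub_zero] at this
  linarith

theorem StrongConvexOn.le_of_lipschitz_gradient [Nontrivial F] {P : F → ℝ} {μ L : ℝ}
    (hsc : StrongConvexOn univ μ P) (hP : Differentiable ℝ P)
    (hLip : ∀ a b, ‖gradient P a - gradient P b‖ ≤ L * ‖a - b‖) : μ ≤ L := by
  obtain ⟨y, hy⟩ := exists_ne (0 : F)
  have hlow := hsc.add_inner_add_le (hP 0).hasGradientAt y
  have hup := le_add_inner_add_of_lipschitz (fun z ↦ (hP z).hasGradientAt) hLip 0 y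
  have hy2 : 0 < ‖y - 0‖ ^ 2 := by rw [sub_zero]; exact pow_pos (norm_pos_iff.2 hy) 2
  nlinarith

theorem apply_sub_smul_le {P : F → ℝ} {L : ℝ} (hP : Differentiable ℝ P)
    (hLip : ∀ a b, ‖gradient P a - gradient P b‖ ≤ L * ‖a - b‖) (τ : ℝ) (x d : F) :
    P (x - τ • d) ≤ P x - τ / 2 * ‖gradient P x‖ ^ 2 - τ / 2 * (1 - L * τ) * ‖d‖ ^ 2
      + τ / 2 * ‖gradient P x - d‖ ^ 2 := by
  have hdesc := le_add_inner_add_of_lipschitz (fun z ↦ (hP z).hasGradientAt) hLip x (x - τ • d)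
  rw [sub_sub_cancel_left, inner_neg_right, real_inner_smul_right, norm_neg, norm_smul,
    Real.norm_eq_abs, mul_pow, sq_abs] at hdesc
  rw [norm_sub_sq_real]
  linarith

theorem sub_add_sq_le_mul_of_inexact_step {P : F → ℝ} {Pstar L μ τ : ℝ}
    (hP : Differentiable ℝ P)
    (hLip : ∀ a b, ‖gradient P a - gradient P b‖ ≤ L * ‖a - b‖) (hmin : ∀ x, Pstar ≤ P x)
    (hPL : ∀ x, 2 * μ * (P x - Pstar) ≤ ‖gradient P x‖ ^ 2) (hμ : 0 ≤ μ) (hτ : 0 ≤ τ)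
    (hτL : τ * L ≤ 1 / 4) (hτμ : τ * μ ≤ 1) {x d v u : F}
    (hv : ‖gradient P x - v‖ ≤ 5 / 32 * ‖u‖) (hd : ‖d - v‖ ≤ 5 / 32 * ‖v‖) :
    P (x - τ • d) - Pstar + τ / 16 * ‖v‖ ^ 2
      ≤ (1 - τ * μ / 2) * (P x - Pstar + τ / 16 * ‖u‖ ^ 2) := by
  have hstep := apply_sub_smul_le hP hLip τ x d
  have herr : ‖gradient P x - d‖ ≤ 5 / 32 * (‖u‖ + ‖v‖) := by
    have := norm_sub_le_norm_sub_add_norm_sub (gradient P x) v d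
    rw [norm_sub_rev v d] at this
    linarith
  have hd_norm : 27 / 32 * ‖v‖ ≤ ‖d‖ := by
    have := norm_le_norm_add_norm_sub' v d
    rw [norm_sub_rev v d] at this
    linarith
  have hgrad : τ * μ * (P x - Pstar) ≤ τ / 2 * ‖gradient P x‖ ^ 2 := by
    nlinarith [hPL x]
  have hdecrease : 2187 / 8192 * τ * ‖v‖ ^ 2 ≤ τ / 2 * (1 - L * τ) * ‖d‖ ^ 2 := by
    have hv2 : 729 / 1024 * ‖v‖ ^ 2 ≤ ‖d‖ ^ 2 := by nlinarith [norm_nonneg v]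
    calc 2187 / 8192 * τ * ‖v‖ ^ 2 = τ / 2 * (3 / 4) * (729 / 1024 * ‖v‖ ^ 2) := by ring
      _ ≤ τ / 2 * (1 - L * τ) * ‖d‖ ^ 2 :=
        mul_le_mul (mul_le_mul_of_nonneg_left (by linarith) (by positivity)) hv2 (by positivity)
          (by nlinarith)
  have hnoise : τ / 2 * ‖gradient P x - d‖ ^ 2 ≤ 25 / 1024 * τ * (‖u‖ ^ 2 + ‖v‖ ^ 2) := by
    have : ‖gradient P x - d‖ ^ 2 ≤ 25 / 1024 * (‖u‖ + ‖v‖) ^ 2 := by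
      nlinarith [norm_nonneg (gradient P x - d)]
    nlinarith [sq_nonneg (‖u‖ - ‖v‖)]
  have hD : 0 ≤ τ * μ * (P x - Pstar) := mul_nonneg (mul_nonneg hτ hμ) (sub_nonneg.2 (hmin x))
  have hu : τ * μ * (τ * ‖u‖ ^ 2) ≤ τ * ‖u‖ ^ 2 :=
    mul_le_of_le_one_left (by positivity) hτμ
  have hu' : 0 ≤ τ * ‖u‖ ^ 2 := by positivity
  have hv' : 0 ≤ τ * ‖v‖ ^ 2 := by positivity
  -- `25/1024 + 1/16 < 2187/8192` absorbs the `‖v‖²` terms, `25/1024 < 1/32` the `‖u‖²` terms.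
  linarith

end Gradient

/-- `W i`, `V i` (`i ≤ n`) are the inner iterates and directions of one SARAH epoch with step
`η`, `g i` is the component gradient sampled at step `i`, and `W n - η • V n` is its output. -/
structure IsSarahEpoch {E : Type*} [AddCommGroup E] [Module ℝ E] {n : ℕ}
    (g : Fin n → E → E) (η : ℝ) (W V : ℕ → E) : Prop where
  W_succ : ∀ i : Fin n, W ((i : ℕ) + 1) = W i - η • V i
  V_succ : ∀ i : Fin n, V ((i : ℕ) + 1) = V i + g i (W ((i : ℕ) + 1)) - g i (W i)

namespace IsSarahEpoch

variable {E : Type*} [NormedAddCommGroup E] [NormedSpace ℝ E] {n : ℕ} {g : Fin n → E → E}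
  {η L : ℝ} {W V : ℕ → E}

theorem W_eq_sub_sum (h : IsSarahEpoch g η W V) {i : ℕ} (hi : i ≤ n) :
    W i = W 0 - η • ∑ j ∈ range i, V j := by
  induction i with
  | zero => simp
  | succ i ih =>
    rw [h.W_succ ⟨i, hi⟩, ih (by omega), sum_range_succ, smul_add, sub_sub]

theorem sub_smul_eq_sub_sum (h : IsSarahEpoch g η W V) :
    W n - η • V n = W 0 - η • ∑ j ∈ range (n + 1), V j := by
  rw [h.W_eq_sub_sum le_rfl, sum_range_succ, smul_add, sub_sub]

theorem sub_smul_eq_sub_smul_average (h : IsSarahEpoch g η W V) :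
    W n - η • V n = W 0 - (η * (n + 1)) • (((n : ℝ) + 1)⁻¹ • ∑ j ∈ range (n + 1), V j) := by
  rw [h.sub_smul_eq_sub_sum, smul_smul, mul_assoc, mul_inv_cancel₀ (by positivity), mul_one]

theorem norm_V_succ_sub_le (h : IsSarahEpoch g η W V) (hη : 0 ≤ η)
    (hg : ∀ i a b, ‖g i a - g i b‖ ≤ L * ‖a - b‖) (i : Fin n) :
    ‖V ((i : ℕ) + 1) - V i‖ ≤ η * L * ‖V i‖ := calc
  _ = ‖g i (W ((i : ℕ) + 1)) - g i (W i)‖ := by rw [h.V_succ]; abel_nf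
  _ ≤ L * ‖W ((i : ℕ) + 1) - W i‖ := hg _ _ _
  _ = η * L * ‖V i‖ := by
    rw [h.W_succ, sub_sub_cancel_left, norm_neg, norm_smul, Real.norm_of_nonneg hη]; ring

variable (h : IsSarahEpoch g η W V) (hη : 0 ≤ η) (hL : 0 ≤ L)
  (hg : ∀ i a b, ‖g i a - g i b‖ ≤ L * ‖a - b‖) (hηL : η * n * L ≤ 1 / 8)
include h hη hL hg hηL

/-- Linear in `i` so that the induction hypothesis also yields `‖V i‖ ≤ 5/4 ‖V 0‖`. -/
theorem norm_V_sub_V_zero_le_mul {i : ℕ} (hi : i ≤ n) :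
    ‖V i - V 0‖ ≤ i * (η * L) * (5 / 4 * ‖V 0‖) := by
  induction i with
  | zero => simp
  | succ i ih =>
    have ih := ih (by omega)
    have hiηL : i * (η * L) ≤ 1 / 8 := by
      have : (i : ℝ) ≤ n := by exact_mod_cast (by omega : i ≤ n)
      nlinarith [mul_nonneg hη hL]
    have hVi : ‖V i‖ ≤ 5 / 4 * ‖V 0‖ := by
      have := norm_le_norm_add_norm_sub' (V i) (V 0)
      nlinarith [norm_nonneg (V 0)]
    have hstep : ‖V (i + 1) - V i‖ ≤ η * L * (5 / 4 * ‖V 0‖) :=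
      (h.norm_V_succ_sub_le hη hg ⟨i, hi⟩).trans (by gcongr)
    calc ‖V (i + 1) - V 0‖ ≤ ‖V (i + 1) - V i‖ + ‖V i - V 0‖ :=
          norm_sub_le_norm_sub_add_norm_sub _ _ _
      _ ≤ (i + 1 : ℕ) * (η * L) * (5 / 4 * ‖V 0‖) := by push_cast; linarith

theorem norm_V_sub_V_zero_le {i : ℕ} (hi : i ≤ n) : ‖V i - V 0‖ ≤ 5 / 32 * ‖V 0‖ := by
  have hiηL : i * (η * L) ≤ 1 / 8 := by
    have : (i : ℝ) ≤ n := by exact_mod_cast hi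
    nlinarith [mul_nonneg hη hL]
  nlinarith [h.norm_V_sub_V_zero_le_mul hη hL hg hηL hi, norm_nonneg (V 0)]

theorem norm_V_le {i : ℕ} (hi : i ≤ n) : ‖V i‖ ≤ 5 / 4 * ‖V 0‖ := by
  have := norm_le_norm_add_norm_sub' (V i) (V 0)
  linarith [h.norm_V_sub_V_zero_le hη hL hg hηL hi, norm_nonneg (V 0)]

theorem norm_average_V_sub_V_zero_le :
    ‖((n : ℝ) + 1)⁻¹ • ∑ j ∈ range (n + 1), V j - V 0‖ ≤ 5 / 32 * ‖V 0‖ := by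
  have hn : ((n : ℝ) + 1) ≠ 0 := by positivity
  have key := norm_inv_card_smul_sum_le (s := range (n + 1)) (x := fun j ↦ V j - V 0)
    (by positivity) fun j hj ↦
      h.norm_V_sub_V_zero_le hη hL hg hηL (by simpa [Nat.lt_succ_iff] using hj)
  rw [sum_sub_distrib, sum_const, card_range, smul_sub, ← Nat.cast_smul_eq_nsmul ℝ,
    smul_smul] at key
  simpa [hn] using key

theorem norm_W_succ_sub_le (i : Fin n) :
    ‖W ((i : ℕ) + 1) - (W n - η • V n)‖ ≤ η * n * (5 / 4 * ‖V 0‖) := by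
  have hsplit :
      W ((i : ℕ) + 1) - (W n - η • V n) = η • ∑ j ∈ Ico ((i : ℕ) + 1) (n + 1), V j := by
    rw [h.W_eq_sub_sum (i := (i : ℕ) + 1) i.isLt, h.sub_smul_eq_sub_sum,
      ← sum_range_add_sum_Ico _ (by omega : (i : ℕ) + 1 ≤ n + 1), smul_add]
    abel
  have hsum : ‖∑ j ∈ Ico ((i : ℕ) + 1) (n + 1), V j‖ ≤ n * (5 / 4 * ‖V 0‖) := calc
    _ ≤ ∑ j ∈ Ico ((i : ℕ) + 1) (n + 1), ‖V j‖ := norm_sum_le _ _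
    _ ≤ #(Ico ((i : ℕ) + 1) (n + 1)) • (5 / 4 * ‖V 0‖) :=
      sum_le_card_nsmul _ _ _ fun j hj ↦ h.norm_V_le hη hL hg hηL (by simp at hj; omega)
    _ ≤ n * (5 / 4 * ‖V 0‖) := by
      rw [Nat.card_Ico, nsmul_eq_mul]
      gcongr
      exact_mod_cast (by omega : n + 1 - ((i : ℕ) + 1) ≤ n)
  rw [hsplit, norm_smul, Real.norm_of_nonneg hη, mul_assoc]
  gcongr

theorem norm_average_g_sub_le :
    ‖(1 / (n : ℝ)) • ∑ i, g i (W ((i : ℕ) + 1)) - (1 / (n : ℝ)) • ∑ i, g i (W n - η • V n)‖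
      ≤ 5 / 32 * ‖V 0‖ := by
  have key := norm_inv_card_smul_sum_le (s := univ)
    (x := fun i ↦ g i (W ((i : ℕ) + 1)) - g i (W n - η • V n))
    (r := L * (η * n * (5 / 4 * ‖V 0‖))) (by positivity) fun i _ ↦
      (hg _ _ _).trans (by gcongr; exact h.norm_W_succ_sub_le hη hL hg hηL i)
  rw [sum_sub_distrib, smul_sub, card_univ, Fintype.card_fin] at key
  rw [one_div]
  nlinarith [norm_nonneg (V 0)]

end IsSarahEpoch

theorem shuffled_sarah_geometric_decay_general
    {d n : ℕ} (hd : 1 ≤ d) (hn : 1 ≤ n)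
    (f : Fin n → EuclideanSpace ℝ (Fin d) → ℝ)
    (P : EuclideanSpace ℝ (Fin d) → ℝ)
    (hP : ∀ w, P w = (1 / (n : ℝ)) * ∑ i, f i w)
    (L μ δ η : ℝ) (hL : 0 < L) (hμ : 0 < μ)
    (hdiff : ∀ i, Differentiable ℝ (f i))
    (hLip : ∀ i w₁ w₂, ‖gradient (f i) w₁ - gradient (f i) w₂‖ ≤ L * ‖w₁ - w₂‖)
    (hsc : StrongConvexOn Set.univ μ P)
    (wstar : EuclideanSpace ℝ (Fin d)) (hmin : IsMinOn P Set.univ wstar)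
    (Pstar : ℝ) (hPstar : Pstar = P wstar)
    (hη0 : 0 < η)
    (hη : η ≤ min (1 / (8 * n * L)) (1 / (8 * n ^ 2 * δ)))
    -- the Shuffled-SARAH trajectory
    (π : ℕ → Equiv.Perm (Fin n))
    (w v : ℕ → EuclideanSpace ℝ (Fin d))
    (W V : ℕ → ℕ → EuclideanSpace ℝ (Fin d))
    (hW0 : ∀ s, W s 0 = w s) (hV0 : ∀ s, V s 0 = v s)
    (hWrec : ∀ s, ∀ i : Fin n, W s ((i : ℕ) + 1) = W s i - η • V s i)
    (hVrec : ∀ s, ∀ i : Fin n, V s ((i : ℕ) + 1)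
      = V s i + gradient (f (π s i)) (W s ((i : ℕ) + 1)) - gradient (f (π s i)) (W s i))
    (hwnext : ∀ s, w (s + 1) = W s n - η • V s n)
    (hvnext : ∀ s, v (s + 1)
      = (1 / (n : ℝ)) • ∑ i : Fin n, gradient (f (π s i)) (W s ((i : ℕ) + 1))) :
    ∀ S : ℕ, 1 ≤ S →
      P (w S) - Pstar + (η * ((n : ℝ) + 1) / 16) * ‖v (S - 1)‖ ^ 2
        ≤ (1 - η * μ * ((n : ℝ) + 1) / 2) ^ (S - 1)
          * (P (w 1) - Pstar + (η * ((n : ℝ) + 1) / 16) * ‖v 0‖ ^ 2) := by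
  subst hPstar
  have hηnL : η * n * L ≤ 1 / 8 := by
    have := (le_div_iff₀ (by positivity)).1 (le_min_iff.1 hη).1
    linarith
  have hgradP : ∀ x, HasGradientAt P ((1 / (n : ℝ)) • ∑ i, gradient (f i) x) x := by
    rw [funext hP]
    exact hasGradientAt_const_mul_sum _ _ hdiff
  have hPd : Differentiable ℝ P := fun x ↦ (hgradP x).differentiableAt
  have hLipP : ∀ a b, ‖gradient P a - gradient P b‖ ≤ L * ‖a - b‖ := fun a b ↦ by
    simpa [(hgradP _).gradient, ← smul_sub] using norm_inv_card_smul_sum_le (s := univ)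
      (x := fun i ↦ gradient (f i) a - gradient (f i) b) (by positivity) fun i _ ↦ hLip i a b
  have : Nonempty (Fin d) := ⟨⟨0, hd⟩⟩
  have hμL := hsc.le_of_lipschitz_gradient hPd hLipP
  have hτL : η * ((n : ℝ) + 1) * L ≤ 1 / 4 := by
    have : (1 : ℝ) ≤ n := by exact_mod_cast hn
    nlinarith [mul_pos hη0 hL]
  have hτμ : η * ((n : ℝ) + 1) * μ ≤ 1 / 4 :=
    le_trans (mul_le_mul_of_nonneg_left hμL (by positivity)) hτL
  have hepoch s : IsSarahEpoch (fun i ↦ gradient (f (π s i))) η (W s) (V s) := ⟨hWrec s, hVrec s⟩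
  have hnext s : ‖gradient P (w (s + 1)) - v (s + 1)‖ ≤ 5 / 32 * ‖v s‖ := by
    have := (hepoch s).norm_average_g_sub_le hη0.le hL.le (fun i ↦ hLip _) hηnL
    rwa [Equiv.sum_comp (π s) fun i ↦ gradient (f i) (W s n - η • V s n), ← hwnext, ← hvnext,
      hV0, ← (hgradP _).gradient, norm_sub_rev] at this
  have hcontract t : P (w (t + 1 + 1)) - P wstar + η * ((n : ℝ) + 1) / 16 * ‖v (t + 1)‖ ^ 2
      ≤ (1 - η * μ * ((n : ℝ) + 1) / 2)
        * (P (w (t + 1)) - P wstar + η * ((n : ℝ) + 1) / 16 * ‖v t‖ ^ 2) := by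
    have hdir := (hepoch (t + 1)).norm_average_V_sub_V_zero_le hη0.le hL.le (fun i ↦ hLip _) hηnL
    rw [hV0] at hdir
    rw [hwnext, (hepoch (t + 1)).sub_smul_eq_sub_smul_average, hW0]
    calc _ ≤ (1 - η * ((n : ℝ) + 1) * μ / 2)
          * (P (w (t + 1)) - P wstar + η * ((n : ℝ) + 1) / 16 * ‖v t‖ ^ 2) :=
        sub_add_sq_le_mul_of_inexact_step hPd hLipP (fun x ↦ by simpa using hmin (mem_univ x))
          (fun x ↦ hsc.two_mul_sub_le_norm_sq hμ.le (hPd x).hasGradientAt wstar) hμ.le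
          (by positivity) hτL (by linarith) (hnext t) hdir
      _ = _ := by ring
  intro S hS
  obtain ⟨T, rfl⟩ : ∃ T, S = T + 1 := ⟨S - 1, by omega⟩
  exact le_geom (u := fun t ↦ P (w (t + 1)) - P wstar + η * ((n : ℝ) + 1) / 16 * ‖v t‖ ^ 2)
    (by linarith) T fun t _ ↦ hcontract t

/-- Corollary 1, geometric decay form, for Shuffled-SARAH. -/
theorem shuffled_sarah_geometric_decay
    {d n : ℕ} (hd : 1 ≤ d) (hn : 1 ≤ n)
    (f : Fin n → EuclideanSpace ℝ (Fin d) → ℝ)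
    (P : EuclideanSpace ℝ (Fin d) → ℝ)
    (hP : ∀ w, P w = (1 / (n : ℝ)) * ∑ i, f i w)
    (L μ δ η : ℝ) (hL : 0 < L) (hμ : 0 < μ) (hδ : 0 < δ)
    (hdiff : ∀ i, Differentiable ℝ (f i))
    (hconv : ∀ i, ConvexOn ℝ Set.univ (f i))
    (hLip : ∀ i w₁ w₂, ‖gradient (f i) w₁ - gradient (f i) w₂‖ ≤ L * ‖w₁ - w₂‖)
    (hsc : StrongConvexOn Set.univ μ P)
    (wstar : EuclideanSpace ℝ (Fin d)) (hmin : IsMinOn P Set.univ wstar)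
    (Pstar : ℝ) (hPstar : Pstar = P wstar)
    (hsim : ∀ i w₁ w₂,
      ‖(gradient (f i) w₁ - gradient P w₁) - (gradient (f i) w₂ - gradient P w₂)‖
        ≤ (δ / 2) * ‖w₁ - w₂‖)
    (hη0 : 0 < η)
    (hη : η ≤ min (1 / (8 * n * L)) (1 / (8 * n ^ 2 * δ)))
    -- the Shuffled-SARAH trajectory
    (π : ℕ → Equiv.Perm (Fin n))
    (w v : ℕ → EuclideanSpace ℝ (Fin d))
    (W V : ℕ → ℕ → EuclideanSpace ℝ (Fin d))
    (hW0 : ∀ s, W s 0 = w s) (hV0 : ∀ s, V s 0 = v s)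
    (hWrec : ∀ s, ∀ i : Fin n, W s ((i : ℕ) + 1) = W s i - η • V s i)
    (hVrec : ∀ s, ∀ i : Fin n, V s ((i : ℕ) + 1)
      = V s i + gradient (f (π s i)) (W s ((i : ℕ) + 1)) - gradient (f (π s i)) (W s i))
    (hwnext : ∀ s, w (s + 1) = W s n - η • V s n)
    (hvnext : ∀ s, v (s + 1)
      = (1 / (n : ℝ)) • ∑ i : Fin n, gradient (f (π s i)) (W s ((i : ℕ) + 1))) :
    ∀ S : ℕ, 1 ≤ S →
      P (w S) - Pstar + (η * ((n : ℝ) + 1) / 16) * ‖v (S - 1)‖ ^ 2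
        ≤ (1 - η * μ * ((n : ℝ) + 1) / 2) ^ (S - 1)
          * (P (w 1) - Pstar + (η * ((n : ℝ) + 1) / 16) * ‖v 0‖ ^ 2) :=
  shuffled_sarah_geometric_decay_general hd hn f P hP L μ δ η hL hμ hdiff hLip hsc wstar hmin Pstar
    hPstar hη0 hη π w v W V hW0 hV0 hWrec hVrec hwnext hvnext
end

section
/- (Corollary 1, iteration-complexity form.) Assume each f_i is convex, P is μ-strongly convex with minimizer w* and optimal value P*, the δ-similarity condition holds, and 0 < η ≤ min(1/(8nL), 1/(8n²δ)). Consider the Shuffled-SARAH trajectory (w_s, v_s)_{s≥0} defined by: for each s ≥ 0, run a SARAH epoch with step size η, permutation π_s, start point w_s and initial direction v_s, producing inner iterates w¹_s,…,wⁿ_s and output w_{s+1}, and set v_{s+1} = (1/n)·Σ_{i=1}^{n} ∇f_{π_s(i)}(wⁱ_s). Let Φ₁ = P(w_1) − P* + (η(n+1)/16)·‖v_0‖² and fix ε > 0 with Φ₁ > 0. Then for every integer S ≥ 1 + (2/(η·μ·(n+1)))·max(0, log(Φ₁/ε)), it holds that P(w_S) − P* ≤ ε. -/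
/-!
Every inner step of an epoch is an inexact gradient step: by the descent lemma and the
Polyak–Łojasiewicz inequality that strong convexity implies, it contracts `P - P*` by `1 - ημ`,
up to a penalty `η/2 ‖vᵗ - ∇P(wᵗ)‖²` and a reward `η/2 (1 - 2ηL) ‖vᵗ‖²`. Under δ-similarity the
SARAH correction moves the error `vᵗ - ∇P(wᵗ)` by at most `(δη/2) ‖vᵗ‖` per step, and the averaged
direction that starts the next epoch is within `ηL Σₜ ‖vᵗ‖` of `∇P(w_{s+1})`. Hence
`P(w_{s+1}) - P* + (3/64) η Σₜ ‖vᵗ_s‖²` contracts by `1 - ημ(n+1)/2` per epoch, starts below `Φ₁`,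
and `(1 - ρ)ᵐ ≤ exp(-ρm)` gives the iteration count.
-/

open Finset
open scoped RealInnerProductSpace

theorem ConvexOn.add_le_of_hasFDerivAt {E : Type*} [NormedAddCommGroup E] [NormedSpace ℝ E]
    {f : E → ℝ} {f' : E →L[ℝ] ℝ} {x : E} (hf : ConvexOn ℝ Set.univ f) (hx : HasFDerivAt f f' x)
    (y : E) : f x + f' (y - x) ≤ f y := by
  have hline : HasDerivAt (f ∘ (AffineMap.lineMap x y : ℝ →ᵃ[ℝ] E)) (f' (y - x)) 0 := by
    have hl : HasDerivAt (AffineMap.lineMap x y : ℝ → E) (y - x) 0 := AffineMap.hasDerivAt_lineMap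
    exact hx.comp_hasDerivAt_of_eq (0 : ℝ) hl (by simp)
  have := (hf.comp_affineMap (AffineMap.lineMap x y)).le_slope_of_hasDerivAt
    (Set.mem_univ 0) (Set.mem_univ 1) one_pos hline
  simp only [slope_def_field, Function.comp_apply, AffineMap.lineMap_apply_one,
    AffineMap.lineMap_apply_zero, sub_zero, div_one] at this
  linarith

theorem norm_one_div_smul_sum_le {F : Type*} [SeminormedAddCommGroup F] [NormedSpace ℝ F]
    {n : ℕ} (hn : 0 < n) {u : Fin n → F} {C : ℝ} (h : ∀ i, ‖u i‖ ≤ C) :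
    ‖(1 / (n : ℝ)) • ∑ i, u i‖ ≤ C := by
  have hsum : ‖∑ i, u i‖ ≤ n * C := by
    simpa using norm_sum_le_of_le Finset.univ fun i _ => h i
  rw [norm_smul, Real.norm_of_nonneg (by positivity), one_div, inv_mul_le_iff₀ (by positivity)]
  exact hsum

theorem one_sub_pow_le_one_sub_mul_div_two {x : ℝ} (hx0 : 0 ≤ x) {m : ℕ} (hm : m * x ≤ 1) :
    (1 - x) ^ m ≤ 1 - m * x / 2 := by
  induction m with
  | zero => simp
  | succ k ih =>
    push_cast at hm ⊢
    have hk : (k : ℝ) * x ≤ 1 := by nlinarith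
    have hx1 : 0 ≤ 1 - x := by nlinarith [(Nat.cast_nonneg k : (0 : ℝ) ≤ k)]
    calc (1 - x) ^ (k + 1) = (1 - x) ^ k * (1 - x) := pow_succ _ _
      _ ≤ (1 - k * x / 2) * (1 - x) := by gcongr; exact ih hk
      _ ≤ 1 - (k + 1) * x / 2 := by nlinarith

theorem le_of_geometric_contraction {G : ℕ → ℝ} {ρ Φ ε : ℝ} (hρ0 : 0 < ρ) (hρ1 : ρ ≤ 1)
    (hG : ∀ s, G (s + 1) ≤ (1 - ρ) * G s) (hG0 : G 0 ≤ Φ) (hΦ : 0 < Φ) (hε : 0 < ε) {m : ℕ}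
    (hm : 1 / ρ * max 0 (Real.log (Φ / ε)) ≤ m) : G m ≤ ε := by
  have hlog : Real.log (Φ / ε) ≤ ρ * m := by
    rw [one_div, inv_mul_le_iff₀ hρ0] at hm
    exact (le_max_right _ _).trans hm
  have hpow : (1 - ρ) ^ m ≤ ε / Φ :=
    calc (1 - ρ) ^ m ≤ Real.exp (-ρ) ^ m :=
          pow_le_pow_left₀ (by linarith) (Real.one_sub_le_exp_neg ρ) m
      _ = Real.exp (-(ρ * m)) := by rw [← Real.exp_nat_mul]; ring_nf
      _ ≤ Real.exp (-Real.log (Φ / ε)) := Real.exp_le_exp.mpr (by linarith)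
      _ = ε / Φ := by rw [Real.exp_neg, Real.exp_log (by positivity), inv_div]
  calc G m ≤ (1 - ρ) ^ m * G 0 := le_geom (by linarith) m fun k _ => hG k
    _ ≤ (1 - ρ) ^ m * Φ := by gcongr
    _ ≤ ε / Φ * Φ := by gcongr
    _ = ε := div_mul_cancel₀ ε hΦ.ne'

theorem step_size_bounds {n : ℕ} {L δ η : ℝ} (hn : 1 ≤ n) (hL : 0 < L) (hδ : 0 < δ)
    (hη : η ≤ min (1 / (8 * n * L)) (1 / (8 * n ^ 2 * δ))) :
    η * L * n ≤ 1 / 8 ∧ η * δ * n ^ 2 ≤ 1 / 8 := by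
  have hn0 : (0 : ℝ) < n := by exact_mod_cast hn
  have h₁ := hη.trans (min_le_left _ _)
  have h₂ := hη.trans (min_le_right _ _)
  rw [le_div_iff₀ (by positivity)] at h₁ h₂
  constructor <;> linarith

theorem le_pow_mul_sub_sum_add_sum {a A B : ℕ → ℝ} {q : ℝ} (hq0 : 0 ≤ q) (hq1 : q ≤ 1)
    (hA : ∀ t, 0 ≤ A t) (hB : ∀ t, 0 ≤ B t) {T : ℕ}
    (h : ∀ t < T, a (t + 1) ≤ q * a t - A t + B t) :
    a T ≤ q ^ T * (a 0 - ∑ t ∈ range T, A t) + ∑ t ∈ range T, B t := by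
  induction T with
  | zero => simp
  | succ T ih =>
    have ih := ih fun t ht => h t (by omega)
    have hqT : q * q ^ T ≤ 1 := by rw [← pow_succ']; exact pow_le_one₀ hq0 hq1
    have hBsum : q * ∑ t ∈ range T, B t ≤ ∑ t ∈ range T, B t :=
      mul_le_of_le_one_left (sum_nonneg fun t _ => hB t) hq1
    have hAT : q * q ^ T * A T ≤ A T := mul_le_of_le_one_left (hA T) hqT
    rw [sum_range_succ, sum_range_succ, pow_succ']
    linarith [h T (by omega), mul_le_mul_of_nonneg_left ih hq0]

section Hilbert

variable {E : Type*} [NormedAddCommGroup E] [InnerProductSpace ℝ E] [CompleteSpace E]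

theorem StrongConvexOn.add_inner_gradient_add_le {P : E → ℝ} {μ : ℝ}
    (hP : StrongConvexOn Set.univ μ P) {x : E} (hx : DifferentiableAt ℝ P x) (y : E) :
    P x + ⟪gradient P x, y - x⟫ + μ / 2 * ‖y - x‖ ^ 2 ≤ P y := by
  have hg := hx.hasGradientAt.hasFDerivAt.sub
    ((hasStrictFDerivAt_norm_sq x).hasFDerivAt.const_mul (μ / 2))
  have := (strongConvexOn_iff_convex.mp hP).add_le_of_hasFDerivAt hg y
  have hy : ‖y‖ ^ 2 = ‖x‖ ^ 2 + 2 * ⟪x, y - x⟫ + ‖y - x‖ ^ 2 := by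
    rw [← norm_add_sq_real, add_sub_cancel]
  simp only [sub_apply, smul_apply, nsmul_eq_mul, Nat.cast_ofNat,
    InnerProductSpace.toDual_apply_apply, innerSL_apply_apply, smul_eq_mul] at this
  rw [hy] at this
  linarith

theorem StrongConvexOn.inner_gradient_sub_ge {P : E → ℝ} {μ : ℝ}
    (hP : StrongConvexOn Set.univ μ P) {x y : E} (hx : DifferentiableAt ℝ P x)
    (hy : DifferentiableAt ℝ P y) :
    μ * ‖x - y‖ ^ 2 ≤ ⟪gradient P x - gradient P y, x - y⟫ := by
  have hxy := hP.add_inner_gradient_add_le hx y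
  have hyx := hP.add_inner_gradient_add_le hy x
  rw [← neg_sub x y, norm_neg, inner_neg_right] at hxy
  rw [inner_sub_left]
  linarith

theorem StrongConvexOn.mul_sub_le_norm_gradient_sq {P : E → ℝ} {μ : ℝ}
    (hP : StrongConvexOn Set.univ μ P) (hμ : 0 < μ) {x : E} (hx : DifferentiableAt ℝ P x) (y : E) :
    2 * μ * (P x - P y) ≤ ‖gradient P x‖ ^ 2 := by
  have h := hP.add_inner_gradient_add_le hx y
  have hcs := neg_le_of_abs_le (abs_real_inner_le_norm (gradient P x) (y - x))
  nlinarith [sq_nonneg (μ * ‖y - x‖ - ‖gradient P x‖)]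

theorem StrongConvexOn.le_of_lipschitz_gradient_s2 [Nontrivial E] {P : E → ℝ} {μ L : ℝ}
    (hP : StrongConvexOn Set.univ μ P) (hd : Differentiable ℝ P)
    (hlip : ∀ x y, ‖gradient P x - gradient P y‖ ≤ L * ‖x - y‖) : μ ≤ L := by
  obtain ⟨x, y, hxy⟩ := exists_pair_ne E
  have hpos : 0 < ‖x - y‖ ^ 2 := by simpa [sq_pos_iff, sub_eq_zero] using hxy
  have hmono := hP.inner_gradient_sub_ge (hd x) (hd y)
  have hcs := real_inner_le_norm (gradient P x - gradient P y) (x - y)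
  have hL := mul_le_mul_of_nonneg_right (hlip x y) (norm_nonneg (x - y))
  nlinarith

-- The mean value inequality gives `L` where the sharp constant is `L / 2`; `L` suffices here.
theorem le_add_inner_gradient_add_of_lipschitz_gradient {P : E → ℝ} {L : ℝ} (hL : 0 ≤ L)
    (hd : Differentiable ℝ P) (hlip : ∀ x y, ‖gradient P x - gradient P y‖ ≤ L * ‖x - y‖)
    (x y : E) : P y ≤ P x + ⟪gradient P x, y - x⟫ + L * ‖y - x‖ ^ 2 := by
  have hmv := Convex.norm_image_sub_le_of_norm_hasFDerivWithin_le'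
    (f' := fun z => InnerProductSpace.toDual ℝ E (gradient P z))
    (φ := InnerProductSpace.toDual ℝ E (gradient P x)) (C := L * ‖y - x‖)
    (fun z _ => (hd z).hasGradientAt.hasFDerivAt.hasFDerivWithinAt)
    (fun z hz => ?_) (convex_closedBall x ‖y - x‖)
    (Metric.mem_closedBall_self (norm_nonneg _))
    (by rw [Metric.mem_closedBall, dist_eq_norm])
  · rw [InnerProductSpace.toDual_apply_apply, Real.norm_eq_abs] at hmv
    nlinarith [le_abs_self (P y - P x - ⟪gradient P x, y - x⟫)]
  · rw [← map_sub, LinearIsometryEquiv.norm_map]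
    refine (hlip z x).trans (mul_le_mul_of_nonneg_left ?_ hL)
    rwa [Metric.mem_closedBall, dist_eq_norm] at hz

theorem hasGradientAt_of_eq_const_mul_sum {ι : Type*} {s : Finset ι} {c : ℝ} {f : ι → E → ℝ}
    {P : E → ℝ} (hP : ∀ w, P w = c * ∑ i ∈ s, f i w) {x : E}
    (hf : ∀ i ∈ s, DifferentiableAt ℝ (f i) x) :
    HasGradientAt P (c • ∑ i ∈ s, gradient (f i) x) x := by
  rw [funext hP, hasGradientAt_iff_hasFDerivAt, map_smul, map_sum]
  exact (HasFDerivAt.fun_sum fun i hi => (hf i hi).hasGradientAt.hasFDerivAt).const_mul c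

theorem norm_gradient_sub_le_of_eq_average {n : ℕ} (hn : 0 < n) {f : Fin n → E → ℝ} {P : E → ℝ}
    (hgrad : ∀ y, gradient P y = (1 / (n : ℝ)) • ∑ i, gradient (f i) y) {L : ℝ}
    (hLip : ∀ i w₁ w₂, ‖gradient (f i) w₁ - gradient (f i) w₂‖ ≤ L * ‖w₁ - w₂‖) (x y : E) :
    ‖gradient P x - gradient P y‖ ≤ L * ‖x - y‖ := by
  rw [hgrad, hgrad, ← smul_sub, ← sum_sub_distrib]
  exact norm_one_div_smul_sum_le hn fun i => hLip i x y

theorem inexact_gradient_step_sub_le {P : E → ℝ} {L μ η Pstar : ℝ} (hL : 0 ≤ L)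
    (hd : Differentiable ℝ P) (hlip : ∀ x y, ‖gradient P x - gradient P y‖ ≤ L * ‖x - y‖)
    (hη : 0 ≤ η) {x : E} (hPL : 2 * μ * (P x - Pstar) ≤ ‖gradient P x‖ ^ 2) (v : E) :
    P (x - η • v) - Pstar ≤ (1 - η * μ) * (P x - Pstar) - η / 2 * (1 - 2 * η * L) * ‖v‖ ^ 2
      + η / 2 * ‖v - gradient P x‖ ^ 2 := by
  have hdesc := le_add_inner_gradient_add_of_lipschitz_gradient hL hd hlip x (x - η • v)
  rw [sub_sub_cancel_left, inner_neg_right, norm_neg, inner_smul_right, norm_smul,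
    Real.norm_of_nonneg hη] at hdesc
  have hpolar : 2 * ⟪gradient P x, v⟫ = ‖gradient P x‖ ^ 2 + ‖v‖ ^ 2 - ‖v - gradient P x‖ ^ 2 := by
    rw [norm_sub_sq_real, real_inner_comm]; ring
  nlinarith [mul_le_mul_of_nonneg_left hPL hη]

variable {n : ℕ}

/-- One SARAH epoch, with its output `w⁺ = xⁿ - η vⁿ` stored as `x (n + 1)`. -/
structure IsSarahEpoch_s2 (f : Fin n → E → ℝ) (σ : Fin n → Fin n) (η : ℝ) (x v : ℕ → E) : Prop where
  x_succ : ∀ t ≤ n, x (t + 1) = x t - η • v t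
  v_succ : ∀ i : Fin n,
    v (i + 1) = v i + gradient (f (σ i)) (x (i + 1)) - gradient (f (σ i)) (x i)

namespace IsSarahEpoch_s2

variable {f : Fin n → E → ℝ} {σ : Fin n → Fin n} {η : ℝ} {x v : ℕ → E}

theorem norm_sub_succ (h : IsSarahEpoch_s2 f σ η x v) (hη : 0 ≤ η) {t : ℕ} (ht : t ≤ n) :
    ‖x t - x (t + 1)‖ = η * ‖v t‖ := by
  rw [h.x_succ t ht, sub_sub_cancel, norm_smul, Real.norm_of_nonneg hη]

theorem norm_sub_output_le (h : IsSarahEpoch_s2 f σ η x v) (hη : 0 ≤ η) {k : ℕ} (hk : k ≤ n + 1) :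
    ‖x k - x (n + 1)‖ ≤ η * ∑ t ∈ range (n + 1), ‖v t‖ :=
  calc ‖x k - x (n + 1)‖ ≤ ∑ t ∈ Ico k (n + 1), dist (x t) (x (t + 1)) := by
        rw [← dist_eq_norm]; exact dist_le_Ico_sum_dist x hk
    _ = ∑ t ∈ Ico k (n + 1), η * ‖v t‖ := sum_congr rfl fun t ht => by
        rw [dist_eq_norm, h.norm_sub_succ hη (by rw [mem_Ico] at ht; omega)]
    _ ≤ ∑ t ∈ range (n + 1), η * ‖v t‖ :=
        sum_le_sum_of_subset_of_nonneg (fun t ht => by rw [mem_Ico] at ht; rw [mem_range]; omega)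
          fun _ _ _ => by positivity
    _ = η * ∑ t ∈ range (n + 1), ‖v t‖ := (mul_sum ..).symm

theorem norm_sub_gradient_le (h : IsSarahEpoch_s2 f σ η x v) (hη : 0 ≤ η) {P : E → ℝ} {δ : ℝ}
    (hsim : ∀ i w₁ w₂, ‖(gradient (f i) w₁ - gradient P w₁) - (gradient (f i) w₂ - gradient P w₂)‖
      ≤ δ / 2 * ‖w₁ - w₂‖) {t : ℕ} (ht : t ≤ n) :
    ‖v t - gradient P (x t)‖ ≤ ‖v 0 - gradient P (x 0)‖ + δ / 2 * η * ∑ j ∈ range t, ‖v j‖ := by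
  set e : ℕ → E := fun t => v t - gradient P (x t)
  have hstep : ∀ j < n, dist (e j) (e (j + 1)) ≤ δ / 2 * η * ‖v j‖ := by
    intro j hj
    have hsimj := hsim (σ ⟨j, hj⟩) (x j) (x (j + 1))
    rw [h.norm_sub_succ hη hj.le, ← mul_assoc] at hsimj
    have he : e j - e (j + 1) = (gradient (f (σ ⟨j, hj⟩)) (x j) - gradient P (x j))
        - (gradient (f (σ ⟨j, hj⟩)) (x (j + 1)) - gradient P (x (j + 1))) := by
      simp only [e]
      rw [h.v_succ ⟨j, hj⟩]
      abel
    rwa [dist_eq_norm, he]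
  calc ‖e t‖ ≤ ‖e 0‖ + dist (e 0) (e t) := by
        rw [dist_comm, dist_eq_norm]; exact norm_le_norm_add_norm_sub' _ _
    _ ≤ ‖e 0‖ + ∑ j ∈ range t, dist (e j) (e (j + 1)) := by
        gcongr; exact dist_le_range_sum_dist e t
    _ ≤ ‖e 0‖ + ∑ j ∈ range t, δ / 2 * η * ‖v j‖ := by
        gcongr with j hj; exact hstep j (by rw [mem_range] at hj; omega)
    _ = _ := by rw [mul_sum]

theorem norm_le_pow (h : IsSarahEpoch_s2 f σ η x v) (hη : 0 ≤ η) {L : ℝ} (hL : 0 ≤ L)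
    (hLip : ∀ i w₁ w₂, ‖gradient (f i) w₁ - gradient (f i) w₂‖ ≤ L * ‖w₁ - w₂‖) {t : ℕ}
    (ht : t ≤ n) : ‖v t‖ ≤ (1 + η * L) ^ t * ‖v 0‖ := by
  refine le_geom (u := fun t => ‖v t‖) (by positivity) t fun j hj => ?_
  have hjn : j < n := by omega
  have hsucc : v (j + 1) = v j + (gradient (f (σ ⟨j, hjn⟩)) (x (j + 1))
      - gradient (f (σ ⟨j, hjn⟩)) (x j)) := by
    rw [h.v_succ ⟨j, hjn⟩, add_sub_assoc]
  have hLipj := hLip (σ ⟨j, hjn⟩) (x (j + 1)) (x j)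
  rw [norm_sub_rev (x (j + 1)), h.norm_sub_succ hη hjn.le] at hLipj
  calc ‖v (j + 1)‖ ≤ ‖v j‖ + L * (η * ‖v j‖) := by
        rw [hsucc]; exact (norm_add_le _ _).trans (by gcongr)
    _ = (1 + η * L) * ‖v j‖ := by ring

theorem sum_norm_sq_le (h : IsSarahEpoch_s2 f σ η x v) (hη : 0 ≤ η) {L : ℝ} (hL : 0 ≤ L)
    (hLip : ∀ i w₁ w₂, ‖gradient (f i) w₁ - gradient (f i) w₂‖ ≤ L * ‖w₁ - w₂‖)
    (hηL : η * L * n ≤ 1 / 8) :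
    ∑ t ∈ range (n + 1), ‖v t‖ ^ 2 ≤ 4 / 3 * (n + 1) * ‖v 0‖ ^ 2 := by
  have hterm : ∀ t ∈ range (n + 1), ‖v t‖ ^ 2 ≤ 4 / 3 * ‖v 0‖ ^ 2 := by
    intro t ht
    have htn : t ≤ n := by rw [mem_range] at ht; omega
    have hgrowth : (1 + η * L) ^ (2 * t) ≤ 4 / 3 :=
      calc (1 + η * L) ^ (2 * t) ≤ Real.exp (η * L) ^ (2 * t) := by
            gcongr; linarith [Real.add_one_le_exp (η * L)]
        _ = Real.exp (2 * t * (η * L)) := by rw [← Real.exp_nat_mul]; push_cast; ring_nf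
        _ ≤ Real.exp (1 / 4) := Real.exp_le_exp.mpr (by
            have : (t : ℝ) ≤ n := by exact_mod_cast htn
            nlinarith [mul_nonneg hη hL])
        _ ≤ 1 / (1 - 1 / 4) := Real.exp_bound_div_one_sub_of_interval (by norm_num) (by norm_num)
        _ = 4 / 3 := by norm_num
    calc ‖v t‖ ^ 2 ≤ ((1 + η * L) ^ t * ‖v 0‖) ^ 2 := by
          gcongr; exact h.norm_le_pow hη hL hLip htn
      _ = (1 + η * L) ^ (2 * t) * ‖v 0‖ ^ 2 := by ring
      _ ≤ 4 / 3 * ‖v 0‖ ^ 2 := by gcongr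
  calc ∑ t ∈ range (n + 1), ‖v t‖ ^ 2 ≤ ∑ _t ∈ range (n + 1), 4 / 3 * ‖v 0‖ ^ 2 :=
        sum_le_sum hterm
    _ = 4 / 3 * (n + 1) * ‖v 0‖ ^ 2 := by simp; ring

theorem norm_sub_gradient_sq_le (h : IsSarahEpoch_s2 f σ η x v) (hη : 0 ≤ η) {P : E → ℝ} {δ : ℝ}
    (hδ : 0 ≤ δ)
    (hsim : ∀ i w₁ w₂, ‖(gradient (f i) w₁ - gradient P w₁) - (gradient (f i) w₂ - gradient P w₂)‖
      ≤ δ / 2 * ‖w₁ - w₂‖) {t : ℕ} (ht : t ≤ n) :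
    ‖v t - gradient P (x t)‖ ^ 2 ≤ 8 / 7 * ‖v 0 - gradient P (x 0)‖ ^ 2
      + 2 * (δ * η) ^ 2 * (n + 1) * ∑ j ∈ range (n + 1), ‖v j‖ ^ 2 := by
  set S := ∑ j ∈ range (n + 1), ‖v j‖
  have hCS : S ^ 2 ≤ (n + 1) * ∑ j ∈ range (n + 1), ‖v j‖ ^ 2 := by
    simpa using sq_sum_le_card_mul_sum_sq (s := range (n + 1)) (f := fun j => ‖v j‖)
  have hb : ‖v t - gradient P (x t)‖ ≤ ‖v 0 - gradient P (x 0)‖ + δ / 2 * η * S := by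
    have hsum : ∑ j ∈ range t, ‖v j‖ ≤ S := sum_le_sum_of_subset_of_nonneg
      (range_subset_range.mpr (by omega)) fun _ _ _ => norm_nonneg _
    exact (h.norm_sub_gradient_le hη hsim ht).trans (by gcongr)
  have hsq := pow_le_pow_left₀ (norm_nonneg _) hb 2
  nlinarith [sq_nonneg (‖v 0 - gradient P (x 0)‖ - 7 * (δ / 2 * η * S)),
    mul_le_mul_of_nonneg_left hCS (sq_nonneg (δ * η))]

theorem sum_norm_sub_gradient_sq_le (h : IsSarahEpoch_s2 f σ η x v) (hn : 0 < n) (hη : 0 ≤ η)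
    {P : E → ℝ} {δ : ℝ} (hδ : 0 ≤ δ)
    (hsim : ∀ i w₁ w₂, ‖(gradient (f i) w₁ - gradient P w₁) - (gradient (f i) w₂ - gradient P w₂)‖
      ≤ δ / 2 * ‖w₁ - w₂‖) (hηδ : η * δ * n ^ 2 ≤ 1 / 8) :
    ∑ t ∈ range (n + 1), ‖v t - gradient P (x t)‖ ^ 2
      ≤ 8 / 7 * (n + 1) * ‖v 0 - gradient P (x 0)‖ ^ 2
        + 1 / 8 * ∑ t ∈ range (n + 1), ‖v t‖ ^ 2 := by
  set D := ∑ t ∈ range (n + 1), ‖v t‖ ^ 2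
  have hD : 0 ≤ D := sum_nonneg fun _ _ => by positivity
  have hδη : (δ * η * (n + 1)) ^ 2 ≤ 1 / 16 := by
    have hn2 : (n : ℝ) + 1 ≤ 2 * n ^ 2 := by
      have : (1 : ℝ) ≤ n := by exact_mod_cast hn
      nlinarith
    have : δ * η * (n + 1) ≤ 1 / 4 := by
      nlinarith [mul_le_mul_of_nonneg_left hn2 (mul_nonneg hδ hη)]
    nlinarith [mul_nonneg (mul_nonneg hδ hη) (by positivity : (0 : ℝ) ≤ n + 1)]
  calc ∑ t ∈ range (n + 1), ‖v t - gradient P (x t)‖ ^ 2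
      ≤ ∑ _t ∈ range (n + 1),
          (8 / 7 * ‖v 0 - gradient P (x 0)‖ ^ 2 + 2 * (δ * η) ^ 2 * (n + 1) * D) :=
        sum_le_sum fun t ht => h.norm_sub_gradient_sq_le hη hδ hsim (by rw [mem_range] at ht; omega)
    _ = 8 / 7 * (n + 1) * ‖v 0 - gradient P (x 0)‖ ^ 2 + 2 * (δ * η * (n + 1)) ^ 2 * D := by
        simp; ring
    _ ≤ 8 / 7 * (n + 1) * ‖v 0 - gradient P (x 0)‖ ^ 2 + 1 / 8 * D := by gcongr; linarith

theorem norm_average_sub_gradient_output_le {σ : Equiv.Perm (Fin n)}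
    (h : IsSarahEpoch_s2 f σ η x v) (hn : 0 < n) (hη : 0 ≤ η) {L : ℝ} (hL : 0 ≤ L)
    (hLip : ∀ i w₁ w₂, ‖gradient (f i) w₁ - gradient (f i) w₂‖ ≤ L * ‖w₁ - w₂‖) {P : E → ℝ}
    (hgrad : ∀ y, gradient P y = (1 / (n : ℝ)) • ∑ i, gradient (f i) y) :
    ‖(1 / (n : ℝ)) • ∑ i, gradient (f (σ i)) (x (i + 1)) - gradient P (x (n + 1))‖
      ≤ η * L * ∑ t ∈ range (n + 1), ‖v t‖ := by
  rw [hgrad, ← Equiv.sum_comp σ fun i => gradient (f i) (x (n + 1)), ← smul_sub,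
    ← sum_sub_distrib]
  refine norm_one_div_smul_sum_le hn fun i => (hLip _ _ _).trans ?_
  calc L * ‖x (i + 1) - x (n + 1)‖ ≤ L * (η * ∑ t ∈ range (n + 1), ‖v t‖) := by
        gcongr; exact h.norm_sub_output_le hη (by omega)
    _ = η * L * ∑ t ∈ range (n + 1), ‖v t‖ := by ring

theorem lyapunov_descent (h : IsSarahEpoch_s2 f σ η x v) (hn : 0 < n) (hη : 0 ≤ η) {P : E → ℝ}
    {Pstar L μ δ : ℝ} (hd : Differentiable ℝ P)
    (hlip : ∀ x y, ‖gradient P x - gradient P y‖ ≤ L * ‖x - y‖)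
    (hPL : ∀ x, 2 * μ * (P x - Pstar) ≤ ‖gradient P x‖ ^ 2) (hmin : ∀ x, Pstar ≤ P x)
    (hsim : ∀ i w₁ w₂, ‖(gradient (f i) w₁ - gradient P w₁) - (gradient (f i) w₂ - gradient P w₂)‖
      ≤ δ / 2 * ‖w₁ - w₂‖) (hδ : 0 ≤ δ) (hμ : 0 ≤ μ) (hμL : μ ≤ L)
    (hηL : η * L * n ≤ 1 / 8) (hηδ : η * δ * n ^ 2 ≤ 1 / 8) :
    P (x (n + 1)) - Pstar + 3 / 64 * η * ∑ t ∈ range (n + 1), ‖v t‖ ^ 2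
      ≤ (1 - η * μ * (n + 1) / 2) * (P (x 0) - Pstar)
        + 4 / 7 * η * (n + 1) * ‖v 0 - gradient P (x 0)‖ ^ 2 := by
  set D := ∑ t ∈ range (n + 1), ‖v t‖ ^ 2
  set E₀ := ‖v 0 - gradient P (x 0)‖ ^ 2
  have hn1 : (1 : ℝ) ≤ n := by exact_mod_cast hn
  have hL : 0 ≤ L := hμ.trans hμL
  have hημ : η * μ * (n + 1) ≤ 1 / 4 := by nlinarith [mul_le_mul_of_nonneg_left hμL hη]
  have hηL' : 3 / 4 ≤ 1 - 2 * η * L := by nlinarith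
  have hD : 0 ≤ D := sum_nonneg fun _ _ => by positivity
  have hunroll := le_pow_mul_sub_sum_add_sum (T := n + 1) (a := fun t => P (x t) - Pstar)
    (A := fun t => η / 2 * (1 - 2 * η * L) * ‖v t‖ ^ 2)
    (B := fun t => η / 2 * ‖v t - gradient P (x t)‖ ^ 2) (q := 1 - η * μ) (by nlinarith)
    (by nlinarith) (fun t => mul_nonneg (mul_nonneg (by positivity) (by linarith)) (by positivity))
    (fun t => by positivity) fun t ht => by
      simpa only [h.x_succ t (by omega)] using
        inexact_gradient_step_sub_le hL hd hlip hη (hPL (x t)) (v t)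
  have hA : 3 / 8 * η * D ≤ ∑ t ∈ range (n + 1), η / 2 * (1 - 2 * η * L) * ‖v t‖ ^ 2 := by
    rw [← mul_sum]; nlinarith [mul_nonneg hη hD]
  have hB : ∑ t ∈ range (n + 1), η / 2 * ‖v t - gradient P (x t)‖ ^ 2
      ≤ 4 / 7 * η * (n + 1) * E₀ + 1 / 16 * η * D := by
    rw [← mul_sum]
    nlinarith [mul_le_mul_of_nonneg_left (h.sum_norm_sub_gradient_sq_le hn hη hδ hsim hηδ)
      (by positivity : (0 : ℝ) ≤ η / 2)]
  have hqle : (1 - η * μ) ^ (n + 1) ≤ 1 - η * μ * (n + 1) / 2 := by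
    have := one_sub_pow_le_one_sub_mul_div_two (mul_nonneg hη hμ) (m := n + 1)
      (by push_cast; nlinarith)
    push_cast at this; linarith
  have hqge : 3 / 4 ≤ (1 - η * μ) ^ (n + 1) := by
    have := one_add_mul_le_pow (a := -(η * μ)) (by nlinarith) (n + 1)
    rw [← sub_eq_add_neg] at this
    push_cast at this; linarith
  have ha0 : 0 ≤ P (x 0) - Pstar := sub_nonneg.mpr (hmin _)
  nlinarith [mul_le_mul_of_nonneg_right hqle ha0, mul_le_mul hqge hA (by positivity) (by linarith),
    mul_nonneg hη hD]

theorem lyapunov_succ_le {σ : Equiv.Perm (Fin n)} {σ' : Fin n → Fin n} {x' v' : ℕ → E}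
    (h : IsSarahEpoch_s2 f σ η x v) (h' : IsSarahEpoch_s2 f σ' η x' v') (hx' : x' 0 = x (n + 1))
    (hv' : v' 0 = (1 / (n : ℝ)) • ∑ i, gradient (f (σ i)) (x (i + 1)))
    (hn : 0 < n) (hη : 0 ≤ η) {P : E → ℝ} {Pstar L μ δ : ℝ} (hd : Differentiable ℝ P)
    (hgrad : ∀ y, gradient P y = (1 / (n : ℝ)) • ∑ i, gradient (f i) y)
    (hLip : ∀ i w₁ w₂, ‖gradient (f i) w₁ - gradient (f i) w₂‖ ≤ L * ‖w₁ - w₂‖)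
    (hlip : ∀ x y, ‖gradient P x - gradient P y‖ ≤ L * ‖x - y‖)
    (hPL : ∀ x, 2 * μ * (P x - Pstar) ≤ ‖gradient P x‖ ^ 2) (hmin : ∀ x, Pstar ≤ P x)
    (hsim : ∀ i w₁ w₂, ‖(gradient (f i) w₁ - gradient P w₁) - (gradient (f i) w₂ - gradient P w₂)‖
      ≤ δ / 2 * ‖w₁ - w₂‖) (hδ : 0 ≤ δ) (hμ : 0 ≤ μ) (hμL : μ ≤ L)
    (hηL : η * L * n ≤ 1 / 8) (hηδ : η * δ * n ^ 2 ≤ 1 / 8) :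
    P (x' (n + 1)) - Pstar + 3 / 64 * η * ∑ t ∈ range (n + 1), ‖v' t‖ ^ 2
      ≤ (1 - η * μ * (n + 1) / 2)
        * (P (x (n + 1)) - Pstar + 3 / 64 * η * ∑ t ∈ range (n + 1), ‖v t‖ ^ 2) := by
  set D := ∑ t ∈ range (n + 1), ‖v t‖ ^ 2
  have hL : 0 ≤ L := hμ.trans hμL
  have hn1 : (1 : ℝ) ≤ n := by exact_mod_cast hn
  have hdesc := h'.lyapunov_descent hn hη hd hlip hPL hmin hsim hδ hμ hμL hηL hηδ
  rw [hx', hv'] at hdesc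
  have herr := pow_le_pow_left₀ (norm_nonneg _)
    (h.norm_average_sub_gradient_output_le hn hη hL hLip hgrad) 2
  have hCS : (∑ t ∈ range (n + 1), ‖v t‖) ^ 2 ≤ (n + 1) * D := by
    simpa using sq_sum_le_card_mul_sum_sq (s := range (n + 1)) (f := fun t => ‖v t‖)
  -- the gradient error handed to the next epoch is paid for by the `D`-term of this one
  have hηLn : (η * L * (n + 1)) ^ 2 ≤ 1 / 16 := by
    have : η * L * (n + 1) ≤ 1 / 4 := by nlinarith [mul_nonneg hη hL]
    nlinarith [mul_nonneg (mul_nonneg hη hL) (by positivity : (0 : ℝ) ≤ n + 1)]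
  have hρ : η * μ * (n + 1) / 2 ≤ 1 / 8 := by nlinarith [mul_le_mul_of_nonneg_left hμL hη]
  have hD : 0 ≤ D := sum_nonneg fun _ _ => by positivity
  have hpay : 4 / 7 * η * (n + 1) * ‖(1 / (n : ℝ)) • ∑ i, gradient (f (σ i)) (x (i + 1))
      - gradient P (x (n + 1))‖ ^ 2 ≤ 1 / 28 * η * D := by
    calc _ ≤ 4 / 7 * η * (n + 1) * ((η * L * ∑ t ∈ range (n + 1), ‖v t‖) ^ 2) := by gcongr
      _ ≤ 4 / 7 * η * (n + 1) * ((η * L) ^ 2 * ((n + 1) * D)) := by rw [mul_pow]; gcongr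
      _ = 4 / 7 * (η * L * (n + 1)) ^ 2 * (η * D) := by ring
      _ ≤ 4 / 7 * (1 / 16) * (η * D) := by gcongr
      _ = 1 / 28 * η * D := by ring
  nlinarith [mul_nonneg hη hD]

theorem of_inner_iterates {W V : ℕ → E} {w : E}
    (hW : ∀ i : Fin n, W (i + 1) = W i - η • V i)
    (hV : ∀ i : Fin n, V (i + 1) = V i + gradient (f (σ i)) (W (i + 1)) - gradient (f (σ i)) (W i))
    (hw : w = W n - η • V n) :
    IsSarahEpoch_s2 f σ η (fun t => if t ≤ n then W t else w) V where
  x_succ t ht := by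
    rcases ht.lt_or_eq with ht | rfl
    · simpa [ht.le, Nat.succ_le_of_lt ht] using hW ⟨t, ht⟩
    · simpa using hw
  v_succ i := by simpa [i.isLt.le, Nat.succ_le_of_lt i.isLt] using hV i

end IsSarahEpoch_s2

end Hilbert

theorem shuffled_sarah_iteration_complexity_general
    {d n : ℕ} (hd : 1 ≤ d) (hn : 1 ≤ n)
    (f : Fin n → EuclideanSpace ℝ (Fin d) → ℝ)
    (P : EuclideanSpace ℝ (Fin d) → ℝ)
    (hP : ∀ w, P w = (1 / (n : ℝ)) * ∑ i, f i w)
    (L μ δ η : ℝ) (hL : 0 < L) (hμ : 0 < μ) (hδ : 0 < δ)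
    (hdiff : ∀ i, Differentiable ℝ (f i))
    (hLip : ∀ i w₁ w₂, ‖gradient (f i) w₁ - gradient (f i) w₂‖ ≤ L * ‖w₁ - w₂‖)
    (hsc : StrongConvexOn Set.univ μ P)
    (wstar : EuclideanSpace ℝ (Fin d)) (hmin : IsMinOn P Set.univ wstar)
    (Pstar : ℝ) (hPstar : Pstar = P wstar)
    (hsim : ∀ i w₁ w₂,
      ‖(gradient (f i) w₁ - gradient P w₁) - (gradient (f i) w₂ - gradient P w₂)‖
        ≤ (δ / 2) * ‖w₁ - w₂‖)
    (hη0 : 0 < η)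
    (hη : η ≤ min (1 / (8 * n * L)) (1 / (8 * n ^ 2 * δ)))
    -- the Shuffled-SARAH trajectory
    (π : ℕ → Equiv.Perm (Fin n))
    (w v : ℕ → EuclideanSpace ℝ (Fin d))
    (W V : ℕ → ℕ → EuclideanSpace ℝ (Fin d))
    (hW0 : ∀ s, W s 0 = w s) (hV0 : ∀ s, V s 0 = v s)
    (hWrec : ∀ s, ∀ i : Fin n, W s ((i : ℕ) + 1) = W s i - η • V s i)
    (hVrec : ∀ s, ∀ i : Fin n, V s ((i : ℕ) + 1)
      = V s i + gradient (f (π s i)) (W s ((i : ℕ) + 1)) - gradient (f (π s i)) (W s i))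
    (hwnext : ∀ s, w (s + 1) = W s n - η • V s n)
    (hvnext : ∀ s, v (s + 1)
      = (1 / (n : ℝ)) • ∑ i : Fin n, gradient (f (π s i)) (W s ((i : ℕ) + 1)))
    (Φ : ℝ) (hΦ : Φ = P (w 1) - Pstar + (η * ((n : ℝ) + 1) / 16) * ‖v 0‖ ^ 2)
    (hΦpos : 0 < Φ) (ε : ℝ) (hε : 0 < ε) :
    ∀ S : ℕ,
      1 + (2 / (η * μ * ((n : ℝ) + 1))) * max 0 (Real.log (Φ / ε)) ≤ (S : ℝ) →
      P (w S) - Pstar ≤ ε := by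
  subst hPstar
  have hgradP y :=
    hasGradientAt_of_eq_const_mul_sum hP fun i _ => (hdiff i).differentiableAt (x := y)
  have hPd : Differentiable ℝ P := fun y => (hgradP y).differentiableAt
  have hgrad y := (hgradP y).gradient
  have hlip := norm_gradient_sub_le_of_eq_average hn hgrad hLip
  have : Nonempty (Fin d) := ⟨⟨0, hd⟩⟩
  have hμL := hsc.le_of_lipschitz_gradient_s2 hPd hlip
  obtain ⟨hηL, hηδ⟩ := step_size_bounds hn hL hδ hη
  have hepoch s : IsSarahEpoch_s2 f (π s) η (fun t => if t ≤ n then W s t else w (s + 1)) (V s) :=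
    .of_inner_iterates (hWrec s) (hVrec s) (hwnext s)
  set G : ℕ → ℝ := fun s => P (w (s + 1)) - P wstar + 3 / 64 * η * ∑ t ∈ range (n + 1), ‖V s t‖ ^ 2
  have hG s : G (s + 1) ≤ (1 - η * μ * (n + 1) / 2) * G s := by
    simpa using (hepoch s).lyapunov_succ_le (hepoch (s + 1)) (by simp [hW0]) (by simp [hV0, hvnext])
      hn hη0.le hPd hgrad hLip hlip (fun x => hsc.mul_sub_le_norm_gradient_sq hμ (hPd x) wstar)
      (fun x => hmin (Set.mem_univ x)) hsim hδ.le hμ.le hμL hηL hηδ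
  have hG0 : G 0 ≤ Φ := by
    have := (hepoch 0).sum_norm_sq_le hη0.le hL.le hLip hηL
    simp only [G, hΦ, hV0] at this ⊢
    nlinarith [mul_le_mul_of_nonneg_left this hη0.le]
  intro S hS
  have hρ0 : 0 < η * μ * (n + 1) / 2 := by positivity
  have hρ1 : η * μ * (n + 1) / 2 ≤ 1 := by
    nlinarith [mul_le_mul_of_nonneg_left hμL hη0.le, (by exact_mod_cast hn : (1 : ℝ) ≤ n)]
  have hS1 : 1 ≤ S := by exact_mod_cast (le_add_of_nonneg_right (by positivity)).trans hS
  obtain ⟨m, rfl⟩ := Nat.exists_eq_add_of_le' hS1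
  calc P (w (m + 1)) - P wstar ≤ G m := le_add_of_nonneg_right (by positivity)
    _ ≤ ε := le_of_geometric_contraction hρ0 hρ1 hG hG0 hΦpos hε (by
        rw [one_div_div]; push_cast at hS; linarith)

/-- Corollary 1, iteration-complexity form, for Shuffled-SARAH. -/
theorem shuffled_sarah_iteration_complexity
    {d n : ℕ} (hd : 1 ≤ d) (hn : 1 ≤ n)
    (f : Fin n → EuclideanSpace ℝ (Fin d) → ℝ)
    (P : EuclideanSpace ℝ (Fin d) → ℝ)
    (hP : ∀ w, P w = (1 / (n : ℝ)) * ∑ i, f i w)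
    (L μ δ η : ℝ) (hL : 0 < L) (hμ : 0 < μ) (hδ : 0 < δ)
    (hdiff : ∀ i, Differentiable ℝ (f i))
    (hconv : ∀ i, ConvexOn ℝ Set.univ (f i))
    (hLip : ∀ i w₁ w₂, ‖gradient (f i) w₁ - gradient (f i) w₂‖ ≤ L * ‖w₁ - w₂‖)
    (hsc : StrongConvexOn Set.univ μ P)
    (wstar : EuclideanSpace ℝ (Fin d)) (hmin : IsMinOn P Set.univ wstar)
    (Pstar : ℝ) (hPstar : Pstar = P wstar)
    (hsim : ∀ i w₁ w₂,
      ‖(gradient (f i) w₁ - gradient P w₁) - (gradient (f i) w₂ - gradient P w₂)‖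
        ≤ (δ / 2) * ‖w₁ - w₂‖)
    (hη0 : 0 < η)
    (hη : η ≤ min (1 / (8 * n * L)) (1 / (8 * n ^ 2 * δ)))
    -- the Shuffled-SARAH trajectory
    (π : ℕ → Equiv.Perm (Fin n))
    (w v : ℕ → EuclideanSpace ℝ (Fin d))
    (W V : ℕ → ℕ → EuclideanSpace ℝ (Fin d))
    (hW0 : ∀ s, W s 0 = w s) (hV0 : ∀ s, V s 0 = v s)
    (hWrec : ∀ s, ∀ i : Fin n, W s ((i : ℕ) + 1) = W s i - η • V s i)
    (hVrec : ∀ s, ∀ i : Fin n, V s ((i : ℕ) + 1)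
      = V s i + gradient (f (π s i)) (W s ((i : ℕ) + 1)) - gradient (f (π s i)) (W s i))
    (hwnext : ∀ s, w (s + 1) = W s n - η • V s n)
    (hvnext : ∀ s, v (s + 1)
      = (1 / (n : ℝ)) • ∑ i : Fin n, gradient (f (π s i)) (W s ((i : ℕ) + 1)))
    (Φ : ℝ) (hΦ : Φ = P (w 1) - Pstar + (η * ((n : ℝ) + 1) / 16) * ‖v 0‖ ^ 2)
    (hΦpos : 0 < Φ) (ε : ℝ) (hε : 0 < ε) :
    ∀ S : ℕ,
      1 + (2 / (η * μ * ((n : ℝ) + 1))) * max 0 (Real.log (Φ / ε)) ≤ (S : ℝ) →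
      P (w S) - Pstar ≤ ε :=
  shuffled_sarah_iteration_complexity_general hd hn f P hP L μ δ η hL hμ hδ hdiff hLip hsc wstar
    hmin Pstar hPstar hsim hη0 hη π w v W V hW0 hV0 hWrec hVrec hwnext hvnext Φ hΦ hΦpos ε hε
end
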